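/- arXiv:math/0401061 — 2 statements merged into one kernel-verified Lean document; each statement's English description precedes it below -/
import Mathlib

section
/- Let n ≥ 5 and for ε ∈ (0,1) define I(ε) = ∫_{ℝⁿ} (1+|x|²)^{-(n - ε(n-4)/2)} (1−|x|²)/(1+|x|²) dx. Then I(ε) = −c̃₂ ε + O(ε²) as ε → 0, where c̃₂ = (n-4)/2 ∫_{ℝⁿ} log(1+|x|²)(|x|²−1)(1+|x|²)^{-(n+1)} dx > 0; in particular I(0) = 0. -/
open MeasureTheory Real Filter Metric Topology Asymptotics Set

noncomputable section

/-- The (pointwise) Laplacian of `f : ℝⁿ → ℝ`. -/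
def lap (n : ℕ) (f : EuclideanSpace ℝ (Fin n) → ℝ) (x : EuclideanSpace ℝ (Fin n)) : ℝ :=
  ∑ i : Fin n, fderiv ℝ (fun y => fderiv ℝ f y (EuclideanSpace.single i 1)) x
    (EuclideanSpace.single i 1)

/-- The constant `c₀ = [(n-4)(n-2)n(n+2)]^{(n-4)/8}`. -/
def c0 (n : ℕ) : ℝ :=
  (((n : ℝ) - 4) * ((n : ℝ) - 2) * (n : ℝ) * ((n : ℝ) + 2)) ^ (((n : ℝ) - 4) / 8)

/-- The standard bubble `δ_{a,λ}`. -/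
def deltaFn (n : ℕ) (a : EuclideanSpace ℝ (Fin n)) (l : ℝ)
    (x : EuclideanSpace ℝ (Fin n)) : ℝ :=
  c0 n * l ^ (((n : ℝ) - 4) / 2) / (1 + l ^ 2 * ‖x - a‖ ^ 2) ^ (((n : ℝ) - 4) / 2)

/-- The best biharmonic Sobolev constant on `ℝⁿ`. -/
def bestS (n : ℕ) : ℝ :=
  sInf { r : ℝ | ∃ u : EuclideanSpace ℝ (Fin n) → ℝ,
    MemLp (lap n u) 2 (volume : Measure (EuclideanSpace ℝ (Fin n))) ∧
    MemLp u (ENNReal.ofReal (2 * (n : ℝ) / ((n : ℝ) - 4))) volume ∧ u ≠ 0 ∧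
    r = (∫ x, (lap n u x) ^ 2) /
      ((∫ x, |u x| ^ (2 * (n : ℝ) / ((n : ℝ) - 4))) ^ (((n : ℝ) - 4) / (n : ℝ))) }

/-- The integral `I(ε)` of Statement 7. -/
def Ifun (n : ℕ) (ε : ℝ) : ℝ :=
  ∫ x : EuclideanSpace ℝ (Fin n),
    (1 + ‖x‖ ^ 2) ^ (-((n : ℝ) - ε * ((n : ℝ) - 4) / 2)) *
      ((1 - ‖x‖ ^ 2) / (1 + ‖x‖ ^ 2))

/-- The constant `c̃₂` of Statement 7. -/
def c2tilde (n : ℕ) : ℝ :=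
  (((n : ℝ) - 4) / 2) * ∫ x : EuclideanSpace ℝ (Fin n),
    Real.log (1 + ‖x‖ ^ 2) * (‖x‖ ^ 2 - 1) * (1 + ‖x‖ ^ 2) ^ (-((n : ℝ) + 1))

/-!
Write `u = 1 + ‖x‖²`, `c = (n - 4) / 2` and `h = (1 - ‖x‖²) u^{-(n+1)}`, so that
`I(ε) = ∫ u^{εc} h` and `c̃₂ = -c ∫ log u · h`.

* `∫ h = 0`: in polar coordinates the radial integrand `r^{n-1} (1 - r²) (1 + r²)^{-(n+1)}` is
  `1/n` times the derivative of `(r / (1 + r²))^n`, which vanishes at `0` and at `∞`.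
* `∫ log u · h < 0`: since `∫ h = 0`, `log u` may be replaced by `log u - log 2`, and
  `(log 2 - log u) h ≥ 0` because both factors change sign on the unit sphere.
* `I(ε) + c̃₂ ε = ∫ (u^{εc} - 1 - εc log u) h`, and `|u^t - 1 - t log u| ≤ 4 t² u^{c+1}` for
  `0 ≤ t ≤ c`; the bound is integrable against `|h| ≤ u^{-n}` because `2 (n - c - 1) = n + 2 > n`.
-/

open Module

theorem Real.exp_sub_one_sub_le_sq_mul_exp {t : ℝ} (ht : 0 ≤ t) :
    exp t - 1 - t ≤ t ^ 2 * exp t := by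
  have hsub : exp t - 1 ≤ t * exp t := by
    have h := add_one_le_exp (-t)
    rw [exp_neg] at h
    nlinarith [mul_inv_cancel₀ (exp_pos t).ne', mul_le_mul_of_nonneg_left h (exp_pos t).le]
  nlinarith [mul_le_mul_of_nonneg_left hsub ht]

theorem Real.abs_rpow_sub_one_sub_mul_log_le {u t c : ℝ} (hu : 1 ≤ u) (ht : 0 ≤ t)
    (htc : t ≤ c) : |u ^ t - 1 - t * log u| ≤ 4 * t ^ 2 * u ^ (c + 1) := by
  have hu0 : 0 < u := by linarith
  have hlog : 0 ≤ log u := log_nonneg hu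
  have hexp : u ^ t = exp (t * log u) := by rw [rpow_def_of_pos hu0, mul_comm]
  have hlog_sq : log u ^ 2 ≤ 4 * u := by
    calc log u ^ 2 ≤ (u ^ (1 / 2 : ℝ) / (1 / 2)) ^ 2 :=
          pow_le_pow_left₀ hlog (log_le_rpow_div hu0.le one_half_pos) 2
      _ = 4 * u := by
          rw [div_pow, ← rpow_natCast, ← rpow_mul hu0.le]
          norm_num
          ring
  rw [abs_of_nonneg (by rw [hexp]; linarith [add_one_le_exp (t * log u)])]
  calc u ^ t - 1 - t * log u ≤ (t * log u) ^ 2 * exp (t * log u) := by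
        rw [hexp]; exact exp_sub_one_sub_le_sq_mul_exp (mul_nonneg ht hlog)
    _ = t ^ 2 * log u ^ 2 * u ^ t := by rw [hexp]; ring
    _ ≤ t ^ 2 * (4 * u) * u ^ c := by gcongr
    _ = 4 * t ^ 2 * u ^ (c + 1) := by rw [rpow_add_one hu0.ne']; ring

section RpowWeight

variable {α : Type*} [MeasurableSpace α] {μ : Measure α} {u h : α → ℝ}

theorem integrable_rpow_mul_of_le (hu : ∀ x, 1 ≤ u x) (hum : AEStronglyMeasurable u μ)
    (hhm : AEStronglyMeasurable h μ) {a b : ℝ} (hba : b ≤ a)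
    (hint : Integrable (fun x => u x ^ a * h x) μ) :
    Integrable (fun x => u x ^ b * h x) μ := by
  refine hint.mono ((hum.aemeasurable.pow_const b).aestronglyMeasurable.mul hhm)
    (.of_forall fun x => ?_)
  have hu0 : 0 ≤ u x := by linarith [hu x]
  rw [norm_mul, norm_mul, norm_of_nonneg (rpow_nonneg hu0 _),
    norm_of_nonneg (rpow_nonneg hu0 _)]
  gcongr
  exact hu x

theorem integrable_log_mul_of_rpow_mul (hu : ∀ x, 1 ≤ u x) (hum : AEStronglyMeasurable u μ)
    (hhm : AEStronglyMeasurable h μ) {a : ℝ} (ha : 0 < a)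
    (hint : Integrable (fun x => u x ^ a * h x) μ) :
    Integrable (fun x => log (u x) * h x) μ := by
  refine (hint.const_mul a⁻¹).mono
    ((measurable_log.comp_aemeasurable hum.aemeasurable).aestronglyMeasurable.mul hhm)
    (.of_forall fun x => ?_)
  have hu0 : 0 ≤ u x := by linarith [hu x]
  rw [norm_mul, norm_mul, norm_mul, norm_of_nonneg (log_nonneg (hu x)),
    norm_of_nonneg (inv_nonneg.2 ha.le), norm_of_nonneg (rpow_nonneg hu0 _), ← mul_assoc,
    inv_mul_eq_div]
  gcongr
  exact log_le_rpow_div hu0 ha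

theorem norm_integral_rpow_mul_sub_le (hu : ∀ x, 1 ≤ u x) (hum : AEStronglyMeasurable u μ)
    (hhm : AEStronglyMeasurable h μ) {c ε : ℝ} (hc : 0 ≤ c) (hε₀ : 0 ≤ ε) (hε₁ : ε ≤ 1)
    (hint : Integrable (fun x => u x ^ (c + 1) * h x) μ) :
    ‖∫ x, u x ^ (ε * c) * h x ∂μ - ∫ x, h x ∂μ - ε * c * ∫ x, log (u x) * h x ∂μ‖ ≤
      4 * (ε * c) ^ 2 * ∫ x, ‖u x ^ (c + 1) * h x‖ ∂μ := by
  have ht : 0 ≤ ε * c := mul_nonneg hε₀ hc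
  have htc : ε * c ≤ c := mul_le_of_le_one_left hc hε₁
  have hint_t := integrable_rpow_mul_of_le hu hum hhm (b := ε * c) (by linarith) hint
  have hint_0 : Integrable h μ := by
    simpa using integrable_rpow_mul_of_le hu hum hhm (b := 0) (by linarith) hint
  have hint_log := integrable_log_mul_of_rpow_mul hu hum hhm (by linarith) hint
  have hcombine : ∫ x, u x ^ (ε * c) * h x ∂μ - ∫ x, h x ∂μ - ε * c * ∫ x, log (u x) * h x ∂μ
      = ∫ x, (u x ^ (ε * c) - 1 - ε * c * log (u x)) * h x ∂μ := by
    have hint_diff : Integrable (fun x => u x ^ (ε * c) * h x - h x) μ := hint_t.sub hint_0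
    rw [← integral_const_mul, ← integral_sub hint_t hint_0,
      ← integral_sub hint_diff (hint_log.const_mul _)]
    congr 1 with x
    ring
  rw [hcombine, ← integral_const_mul]
  refine norm_integral_le_of_norm_le (hint.norm.const_mul _) (.of_forall fun x => ?_)
  have hu0 : 0 ≤ u x := by linarith [hu x]
  rw [norm_mul, norm_mul, norm_of_nonneg (rpow_nonneg hu0 _), Real.norm_eq_abs, ← mul_assoc]
  gcongr
  exact abs_rpow_sub_one_sub_mul_log_le (hu x) ht htc

theorem isBigO_integral_rpow_mul_sub (hu : ∀ x, 1 ≤ u x) (hum : AEStronglyMeasurable u μ)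
    (hhm : AEStronglyMeasurable h μ) {c : ℝ} (hc : 0 ≤ c)
    (hint : Integrable (fun x => u x ^ (c + 1) * h x) μ) :
    (fun ε => ∫ x, u x ^ (ε * c) * h x ∂μ - ∫ x, h x ∂μ - ε * c * ∫ x, log (u x) * h x ∂μ)
      =O[𝓝[≥] 0] fun ε => ε ^ 2 := by
  refine .of_bound (4 * c ^ 2 * ∫ x, ‖u x ^ (c + 1) * h x‖ ∂μ) ?_
  filter_upwards [Ico_mem_nhdsGE zero_lt_one] with ε ⟨hε₀, hε₁⟩
  calc _ ≤ 4 * (ε * c) ^ 2 * ∫ x, ‖u x ^ (c + 1) * h x‖ ∂μ :=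
        norm_integral_rpow_mul_sub_le hu hum hhm hc hε₀ hε₁.le hint
    _ = _ := by rw [norm_pow, norm_eq_abs, sq_abs]; ring

end RpowWeight

def signedProfile (d : ℕ) (r : ℝ) : ℝ := (1 - r ^ 2) * (1 + r ^ 2) ^ (-((d : ℝ) + 1))

@[fun_prop]
theorem continuous_signedProfile (d : ℕ) : Continuous (signedProfile d) :=
  (continuous_const.sub (continuous_pow 2)).mul
    ((continuous_const.add (continuous_pow 2)).rpow_const fun r =>
      .inl (by positivity : (0 : ℝ) < 1 + r ^ 2).ne')

theorem abs_signedProfile_le (d : ℕ) (r : ℝ) :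
    |signedProfile d r| ≤ (1 + r ^ 2) ^ (-(d : ℝ)) := by
  have hpos : 0 < 1 + r ^ 2 := by positivity
  calc |signedProfile d r| = |1 - r ^ 2| * (1 + r ^ 2) ^ (-((d : ℝ) + 1)) := by
        rw [signedProfile, abs_mul, abs_of_nonneg (rpow_nonneg hpos.le _)]
    _ ≤ (1 + r ^ 2) * (1 + r ^ 2) ^ (-((d : ℝ) + 1)) := by
        gcongr
        rw [abs_le]
        constructor <;> nlinarith
    _ = (1 + r ^ 2) ^ (-(d : ℝ)) := by
        rw [show -(d : ℝ) = 1 + -((d : ℝ) + 1) by ring, rpow_add hpos, rpow_one]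

theorem hasDerivAt_div_one_add_sq_pow (d : ℕ) (r : ℝ) :
    HasDerivAt (fun r : ℝ => (r / (1 + r ^ 2)) ^ d) (d * (r ^ (d - 1) * signedProfile d r)) r := by
  have hpos : 0 < 1 + r ^ 2 := by positivity
  have hquot : HasDerivAt (fun r : ℝ => r / (1 + r ^ 2)) ((1 - r ^ 2) / (1 + r ^ 2) ^ 2) r := by
    refine ((hasDerivAt_id r).fun_div ((hasDerivAt_pow 2 r).const_add 1) hpos.ne').congr_deriv ?_
    simp only [id, Nat.cast_ofNat]
    ring
  refine (hquot.fun_pow d).congr_deriv ?_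
  rcases d with _ | k
  · simp
  · rw [Nat.add_sub_cancel, signedProfile,
      show -(((k + 1 : ℕ) : ℝ) + 1) = -((k + 2 : ℕ) : ℝ) by push_cast; ring,
      rpow_neg hpos.le, rpow_natCast, div_pow]
    field_simp
    ring

theorem tendsto_div_one_add_sq_pow_atTop {d : ℕ} (hd : d ≠ 0) :
    Tendsto (fun r : ℝ => (r / (1 + r ^ 2)) ^ d) atTop (𝓝 0) := by
  have hquot : Tendsto (fun r : ℝ => r / (1 + r ^ 2)) atTop (𝓝 0) := by
    refine squeeze_zero' ?_ ?_ tendsto_inv_atTop_zero <;>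
      filter_upwards [eventually_gt_atTop 0] with r hr
    · positivity
    · calc r / (1 + r ^ 2) ≤ r / r ^ 2 := by gcongr; linarith
        _ = r⁻¹ := by field_simp
  simpa [zero_pow hd] using hquot.pow d

theorem sub_log_one_add_sq_mul_signedProfile_nonneg (d : ℕ) (r : ℝ) :
    0 ≤ (log 2 - log (1 + r ^ 2)) * signedProfile d r := by
  have hw : 0 < (1 + r ^ 2) ^ (-((d : ℝ) + 1)) := rpow_pos_of_pos (by positivity) _
  rw [signedProfile]
  rcases le_total (r ^ 2) 1 with hr | hr
  · exact mul_nonneg (sub_nonneg.2 (log_le_log (by positivity) (by linarith)))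
      (mul_nonneg (by linarith) hw.le)
  · exact mul_nonneg_of_nonpos_of_nonpos (sub_nonpos.2 (log_le_log two_pos (by linarith)))
      (mul_nonpos_of_nonpos_of_nonneg (by linarith) hw.le)

section HaarMeasure

variable {E : Type*} [NormedAddCommGroup E] [NormedSpace ℝ E] [FiniteDimensional ℝ E]
  [MeasurableSpace E] [BorelSpace E] (μ : Measure E) [μ.IsAddHaarMeasure]

theorem integrable_rpow_mul_signedProfile_norm {a : ℝ} (ha : a < finrank ℝ E / 2) :
    Integrable (fun x : E => (1 + ‖x‖ ^ 2) ^ a * signedProfile (finrank ℝ E) ‖x‖) μ := by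
  refine (integrable_rpow_neg_one_add_norm_sq (μ := μ) (r := 2 * (finrank ℝ E - a))
    (by linarith)).mono (((continuous_const.add (continuous_norm.pow 2)).rpow_const
      fun x => .inl (zero_lt_one_add_norm_sq x).ne').mul
      ((continuous_signedProfile _).comp continuous_norm)).aestronglyMeasurable
    (.of_forall fun x => ?_)
  have hpos : 0 < 1 + ‖x‖ ^ 2 := by positivity
  rw [norm_mul, norm_of_nonneg (rpow_nonneg hpos.le _), norm_of_nonneg (rpow_nonneg hpos.le _),
    Real.norm_eq_abs]
  calc (1 + ‖x‖ ^ 2) ^ a * |signedProfile (finrank ℝ E) ‖x‖|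
      ≤ (1 + ‖x‖ ^ 2) ^ a * (1 + ‖x‖ ^ 2) ^ (-(finrank ℝ E : ℝ)) := by
        gcongr; exact abs_signedProfile_le _ _
    _ = _ := by rw [← rpow_add hpos]; ring_nf

theorem integral_signedProfile_norm [Nontrivial E] :
    ∫ x, signedProfile (finrank ℝ E) ‖x‖ ∂μ = 0 := by
  rw [integral_fun_norm_addHaar μ]
  set d := finrank ℝ E
  have hd : d ≠ 0 := finrank_pos.ne'
  have hint : IntegrableOn (fun r : ℝ => r ^ (d - 1) • signedProfile d r) (Ioi 0) :=
    (integrable_fun_norm_addHaar μ).1 <| by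
      simpa using integrable_rpow_mul_signedProfile_norm μ (a := 0) (by positivity)
  have hFTC := integral_Ioi_of_hasDerivAt_of_tendsto
    (hasDerivAt_div_one_add_sq_pow d 0).continuousAt.continuousWithinAt
    (fun r _ => hasDerivAt_div_one_add_sq_pow d r) (hint.const_mul d)
    (tendsto_div_one_add_sq_pow_atTop hd)
  rw [integral_const_mul, zero_div, zero_pow hd, sub_self] at hFTC
  simp only [smul_eq_mul]
  rw [(mul_eq_zero.1 hFTC).resolve_left (Nat.cast_ne_zero.2 hd), mul_zero, smul_zero]

theorem integral_log_mul_signedProfile_norm_neg [Nontrivial E] :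
    ∫ x, log (1 + ‖x‖ ^ 2) * signedProfile (finrank ℝ E) ‖x‖ ∂μ < 0 := by
  set d := finrank ℝ E
  have hd : (0 : ℝ) < d := by exact_mod_cast finrank_pos
  have hint : Integrable (fun x : E => signedProfile d ‖x‖) μ := by
    simpa using integrable_rpow_mul_signedProfile_norm μ (a := 0) (by positivity)
  have hint_log : Integrable (fun x : E => log (1 + ‖x‖ ^ 2) * signedProfile d ‖x‖) μ :=
    integrable_log_mul_of_rpow_mul (u := fun x : E => 1 + ‖x‖ ^ 2)
      (fun x => le_add_of_nonneg_right (sq_nonneg _)) (by fun_prop) (by fun_prop)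
      (a := d / 4) (by positivity) (integrable_rpow_mul_signedProfile_norm μ (by linarith))
  have hshift : 0 < ∫ x, (log 2 - log (1 + ‖x‖ ^ 2)) * signedProfile d ‖x‖ ∂μ :=
    integral_pos_of_integrable_nonneg_nonzero (x := 0)
      (by fun_prop (disch := exact fun x => (zero_lt_one_add_norm_sq x).ne'))
      (((hint.const_mul (log 2)).sub hint_log).congr
        (.of_forall fun x => by simp only [Pi.sub_apply]; ring))
      (fun x => sub_log_one_add_sq_mul_signedProfile_nonneg d ‖x‖)
      (by norm_num [signedProfile])
  have hsplit : ∫ x, (log 2 - log (1 + ‖x‖ ^ 2)) * signedProfile d ‖x‖ ∂μ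
      = log 2 * ∫ x, signedProfile d ‖x‖ ∂μ - ∫ x, log (1 + ‖x‖ ^ 2) * signedProfile d ‖x‖ ∂μ := by
    simp only [sub_mul]
    rw [integral_sub (hint.const_mul _) hint_log, integral_const_mul]
  rw [hsplit, integral_signedProfile_norm μ, mul_zero, zero_sub] at hshift
  linarith

end HaarMeasure

theorem Ifun_eq_integral_rpow_mul_signedProfile (n : ℕ) (ε : ℝ) :
    Ifun n ε = ∫ x : EuclideanSpace ℝ (Fin n),
      (1 + ‖x‖ ^ 2) ^ (ε * (((n : ℝ) - 4) / 2)) * signedProfile n ‖x‖ := by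
  unfold Ifun
  congr 1 with x
  have hpos := zero_lt_one_add_norm_sq x
  rw [signedProfile, show -((n : ℝ) - ε * ((n : ℝ) - 4) / 2)
      = ε * (((n : ℝ) - 4) / 2) + -((n : ℝ) + 1) + 1 by ring,
    rpow_add_one hpos.ne', rpow_add hpos]
  field_simp

theorem c2tilde_eq_neg_integral_log_mul_signedProfile (n : ℕ) :
    c2tilde n = -(((n : ℝ) - 4) / 2 * ∫ x : EuclideanSpace ℝ (Fin n),
      log (1 + ‖x‖ ^ 2) * signedProfile n ‖x‖) := by
  rw [c2tilde, ← mul_neg, ← integral_neg]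
  congr 2 with x
  rw [signedProfile]
  ring

/-- the expansion `I(ε) = -c̃₂ ε + O(ε²)` as `ε → 0⁺`, with
`c̃₂ > 0` and `I(0) = 0`. -/
theorem I_expansion (n : ℕ) (hn : 5 ≤ n) :
    Ifun n 0 = 0 ∧ 0 < c2tilde n ∧
    (fun ε : ℝ => Ifun n ε + c2tilde n * ε) =O[𝓝[>] (0 : ℝ)]
      (fun ε : ℝ => ε ^ 2) := by
  have : Nonempty (Fin n) := ⟨⟨0, by omega⟩⟩
  have hc : (0 : ℝ) < ((n : ℝ) - 4) / 2 := by
    have : (5 : ℝ) ≤ n := by exact_mod_cast hn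
    linarith
  have hdim : finrank ℝ (EuclideanSpace ℝ (Fin n)) = n := finrank_euclideanSpace_fin
  have hzero := integral_signedProfile_norm (volume : Measure (EuclideanSpace ℝ (Fin n)))
  have hlog := integral_log_mul_signedProfile_norm_neg
    (volume : Measure (EuclideanSpace ℝ (Fin n)))
  have hint := integrable_rpow_mul_signedProfile_norm
    (volume : Measure (EuclideanSpace ℝ (Fin n))) (a := ((n : ℝ) - 4) / 2 + 1)
    (by rw [hdim]; linarith)
  rw [hdim] at hzero hlog hint
  refine ⟨by simpa [Ifun_eq_integral_rpow_mul_signedProfile] using hzero, ?_, ?_⟩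
  · rw [c2tilde_eq_neg_integral_log_mul_signedProfile]
    exact neg_pos.2 (mul_neg_of_pos_of_neg hc hlog)
  · refine ((isBigO_integral_rpow_mul_sub (u := fun x => 1 + ‖x‖ ^ 2)
      (fun x => le_add_of_nonneg_right (sq_nonneg _)) (by fun_prop) (by fun_prop) hc.le
      hint).mono (nhdsWithin_mono _ Ioi_subset_Ici_self)).congr_left fun ε => ?_
    rw [Ifun_eq_integral_rpow_mul_signedProfile,
      c2tilde_eq_neg_integral_log_mul_signedProfile, hzero]
    ring
end
end

section
/- Let C₁, C₂ > 0, n ≥ 6, and let ε_k → 0⁺, λ_k > 0, a_k in a smooth bounded domain Ω ⊂ ℝⁿ with λ_k d(a_k,∂Ω) → ∞ and H(a_k,a_k) ≥ 0 satisfy C₁ H(a_k,a_k) λ_k^{4-n}(1+o(1)) + C₂ ε_k (1+o(1)) = O( log(λ_k d_k) (λ_k d_k)^{-n} ), where d_k = d(a_k, ∂Ω). Assume furthermore H(a,a) ≥ m d(a,∂Ω)^{4-n} for d(a,∂Ω) small, with m > 0, and H ≥ 0 on Ω × Ω. Then no such sequence exists: the relation leads to a contradiction for large k. -/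
/-!
Write `d = d(a, ∂Ω)` and `t = λ d`. Near the boundary `H(a,a) ≥ m d^{4-n}` by assumption, and
away from it `H(a,a)` is bounded below by a positive constant (compactness) while `d^{4-n}` is
bounded above, so `H(a,a) ≥ c d^{4-n}` on all of `Ω`. Since the `(1+o(1))` factors are eventually
`≥ 1/2` and `≥ 0`, the left side of the balancing relation is eventually at least
`(C₁ c / 2) t^{4-n}`, whereas the right side is `O(log t · t^{-n}) = o(t^{4-n})` as `t → ∞`.
-/

open MeasureTheory Real Filter Metric Topology Asymptotics Set

noncomputable section

section InfDistFrontier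

variable {E : Type*} [MetricSpace E] {s : Set E} {φ : E → ℝ} {δ : ℝ}

theorem isCompact_closure_inter_le_infDist_frontier [ProperSpace E] (hs : Bornology.IsBounded s)
    (δ : ℝ) :
    IsCompact (closure s ∩ {x | δ ≤ infDist x (frontier s)}) :=
  isCompact_of_isClosed_isBounded
    (isClosed_closure.inter (isClosed_le continuous_const (continuous_infDist_pt _)))
    (hs.closure.subset inter_subset_left)

theorem closure_inter_le_infDist_frontier_subset (hδ : 0 < δ) :
    closure s ∩ {x | δ ≤ infDist x (frontier s)} ⊆ s := by
  rintro x ⟨hxc, hxδ : δ ≤ infDist x (frontier s)⟩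
  by_contra hxs
  have hxf : x ∈ frontier s := ⟨hxc, fun hxi => hxs (interior_subset hxi)⟩
  exact (hxδ.trans_eq (infDist_zero_of_mem hxf)).not_gt hδ

theorem exists_pos_le_of_le_infDist_frontier [ProperSpace E] (hs : Bornology.IsBounded s)
    (hφ : ContinuousOn φ s) (hpos : ∀ x ∈ s, 0 < φ x) (hδ : 0 < δ) :
    ∃ μ > 0, ∀ x ∈ s, δ ≤ infDist x (frontier s) → μ ≤ φ x := by
  have hsub := closure_inter_le_infDist_frontier_subset (s := s) hδ
  obtain ⟨μ, hμ, hle⟩ := (isCompact_closure_inter_le_infDist_frontier hs δ).exists_forall_le'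
    (hφ.mono hsub) fun x hx => hpos x (hsub hx)
  exact ⟨μ, hμ, fun x hx hxδ => hle x ⟨subset_closure hx, hxδ⟩⟩

theorem exists_pos_mul_rpow_infDist_frontier_le [ProperSpace E] (hs : Bornology.IsBounded s)
    (hφ : ContinuousOn φ s) (hpos : ∀ x ∈ s, 0 < φ x) {m p : ℝ} (hm : 0 < m) (hδ : 0 < δ)
    (hp : p ≤ 0)
    (hblow : ∀ x ∈ s, infDist x (frontier s) < δ → m * infDist x (frontier s) ^ p ≤ φ x) :
    ∃ c > 0, ∀ x ∈ s, c * infDist x (frontier s) ^ p ≤ φ x := by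
  obtain ⟨μ, hμ, hfar⟩ := exists_pos_le_of_le_infDist_frontier hs hφ hpos hδ
  refine ⟨min m (μ / δ ^ p), by positivity, fun x hx => ?_⟩
  rcases lt_or_ge (infDist x (frontier s)) δ with hxδ | hxδ
  · calc min m (μ / δ ^ p) * infDist x (frontier s) ^ p
        ≤ m * infDist x (frontier s) ^ p :=
          mul_le_mul_of_nonneg_right (min_le_left _ _) (rpow_nonneg infDist_nonneg _)
      _ ≤ φ x := hblow x hx hxδ
  · calc min m (μ / δ ^ p) * infDist x (frontier s) ^ p
        ≤ μ / δ ^ p * δ ^ p :=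
          mul_le_mul (min_le_right _ _) (rpow_le_rpow_of_nonpos hδ hxδ hp)
            (rpow_nonneg infDist_nonneg _) (by positivity)
      _ = μ := div_mul_cancel₀ _ (by positivity)
      _ ≤ φ x := hfar x hx hxδ

end InfDistFrontier

theorem isLittleO_log_mul_rpow_rpow_atTop {p q : ℝ} (hqp : q < p) :
    (fun t : ℝ => log t * t ^ q) =o[atTop] fun t => t ^ p := by
  refine ((isLittleO_log_rpow_atTop (sub_pos.2 hqp)).mul_isBigO
    (isBigO_refl (fun t : ℝ => t ^ q) atTop)).congr' EventuallyEq.rfl ?_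
  filter_upwards [eventually_gt_atTop 0] with t ht
  rw [← rpow_add ht, sub_add_cancel]

theorem Filter.Tendsto.not_rpow_isBigO_log_mul_rpow {α : Type*} {L : Filter α} [L.NeBot]
    {f : α → ℝ} (hf : Tendsto f L atTop) {p q : ℝ} (hqp : q < p) :
    ¬ (fun x => f x ^ p) =O[L] fun x => Real.log (f x) * f x ^ q := fun h =>
  isLittleO_irrefl
    ((hf.eventually_gt_atTop 0).frequently.mono fun _ hx => (rpow_pos_of_pos hx _).ne')
    (h.trans_isLittleO ((isLittleO_log_mul_rpow_rpow_atTop hqp).comp_tendsto hf))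

theorem supercritical_contradiction_general (n : ℕ) (hn : 6 ≤ n)
    (Ω : Set (EuclideanSpace ℝ (Fin n)))
    (hΩb : Bornology.IsBounded Ω)
    (H : EuclideanSpace ℝ (Fin n) → EuclideanSpace ℝ (Fin n) → ℝ)
    (C₁ C₂ m : ℝ) (hC₁ : 0 < C₁) (hC₂ : 0 < C₂) (hm : 0 < m)
    (ε l : ℕ → ℝ) (a : ℕ → EuclideanSpace ℝ (Fin n)) (d : ℕ → ℝ)
    (hd : ∀ k, d k = Metric.infDist (a k) (frontier Ω))
    (hεpos : ∀ k, 0 < ε k)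
    (hlpos : ∀ k, 0 < l k)
    (hld : Tendsto (fun k => l k * d k) atTop atTop)
    (ha : ∀ k, a k ∈ Ω)
    (hHpos : ∀ x ∈ Ω, 0 < H x x)
    (hφcont : ContinuousOn (fun x => H x x) Ω)
    (hblow : ∃ δ > 0, ∀ x ∈ Ω, Metric.infDist x (frontier Ω) < δ →
      m * Metric.infDist x (frontier Ω) ^ (4 - (n : ℝ)) ≤ H x x)
    -- the balancing relation with `(1+o(1))` factors
    (hrel : ∃ u v : ℕ → ℝ, Tendsto u atTop (𝓝 1) ∧ Tendsto v atTop (𝓝 1) ∧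
      (fun k => C₁ * H (a k) (a k) * l k ^ (4 - (n : ℝ)) * u k +
          C₂ * ε k * v k)
        =O[atTop] (fun k => Real.log (l k * d k) * (l k * d k) ^ (-(n : ℝ)))) :
    False := by
  obtain ⟨u, v, hu, hv, hO⟩ := hrel
  obtain ⟨δ, hδ, hblow⟩ := hblow
  have hn4 : 4 - (n : ℝ) ≤ 0 := by
    have : (6 : ℝ) ≤ n := by exact_mod_cast hn
    linarith
  obtain ⟨c, hc, hHd⟩ :=
    exists_pos_mul_rpow_infDist_frontier_le hΩb hφcont hHpos hm hδ hn4 hblow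
  have hlower : ∀ᶠ k in atTop, ‖C₁ * c / 2 * (l k * d k) ^ (4 - (n : ℝ))‖ ≤
      ‖C₁ * H (a k) (a k) * l k ^ (4 - (n : ℝ)) * u k + C₂ * ε k * v k‖ := by
    filter_upwards [hu.eventually (eventually_ge_nhds one_half_lt_one),
      hv.eventually (eventually_ge_nhds zero_lt_one)] with k huk hvk
    have hdk : 0 ≤ d k := hd k ▸ infDist_nonneg
    have hHk : c * d k ^ (4 - (n : ℝ)) ≤ H (a k) (a k) := hd k ▸ hHd (a k) (ha k)
    have hHk₀ := hHpos (a k) (ha k)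
    have hlk := hlpos k
    have hεk := hεpos k
    rw [Real.norm_eq_abs, Real.norm_eq_abs]
    refine abs_le_abs_of_nonneg (by positivity) ?_
    calc C₁ * c / 2 * (l k * d k) ^ (4 - (n : ℝ))
        = C₁ * (c * d k ^ (4 - (n : ℝ))) * l k ^ (4 - (n : ℝ)) * (1 / 2) := by
          rw [mul_rpow hlk.le hdk]; ring
      _ ≤ C₁ * H (a k) (a k) * l k ^ (4 - (n : ℝ)) * u k := by gcongr
      _ ≤ _ := le_add_of_nonneg_right (by positivity)
  exact hld.not_rpow_isBigO_log_mul_rpow (by linarith)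
    (((isBigO_self_const_mul (by positivity) _ _).trans (IsBigO.of_bound' hlower)).trans hO)

/-- the contradiction concluding the nonexistence Theorem 1.3:
no sequence can satisfy the balancing relation of Proposition 5.7. -/
theorem supercritical_contradiction (n : ℕ) (hn : 6 ≤ n)
    (Ω : Set (EuclideanSpace ℝ (Fin n))) (hΩo : IsOpen Ω)
    (hΩb : Bornology.IsBounded Ω) (hΩne : Ω.Nonempty)
    (H : EuclideanSpace ℝ (Fin n) → EuclideanSpace ℝ (Fin n) → ℝ)
    (C₁ C₂ m : ℝ) (hC₁ : 0 < C₁) (hC₂ : 0 < C₂) (hm : 0 < m)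
    (ε l : ℕ → ℝ) (a : ℕ → EuclideanSpace ℝ (Fin n)) (d : ℕ → ℝ)
    (hd : ∀ k, d k = Metric.infDist (a k) (frontier Ω))
    (hεpos : ∀ k, 0 < ε k) (hε0 : Tendsto ε atTop (𝓝 0))
    (hlpos : ∀ k, 0 < l k)
    (hld : Tendsto (fun k => l k * d k) atTop atTop)
    (ha : ∀ k, a k ∈ Ω)
    (hH0 : ∀ x ∈ Ω, ∀ y ∈ Ω, 0 ≤ H x y)
    (hHpos : ∀ x ∈ Ω, 0 < H x x)
    (hφcont : ContinuousOn (fun x => H x x) Ω)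
    (hblow : ∃ δ > 0, ∀ x ∈ Ω, Metric.infDist x (frontier Ω) < δ →
      m * Metric.infDist x (frontier Ω) ^ (4 - (n : ℝ)) ≤ H x x)
    -- the balancing relation with `(1+o(1))` factors
    (hrel : ∃ u v : ℕ → ℝ, Tendsto u atTop (𝓝 1) ∧ Tendsto v atTop (𝓝 1) ∧
      (fun k => C₁ * H (a k) (a k) * l k ^ (4 - (n : ℝ)) * u k +
          C₂ * ε k * v k)
        =O[atTop] (fun k => Real.log (l k * d k) * (l k * d k) ^ (-(n : ℝ)))) :
    False :=
  supercritical_contradiction_general n hn Ω hΩb H C₁ C₂ m hC₁ hC₂ hm ε l a d hd hεpos hlpos hld ha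
    hHpos hφcont hblow hrel
end
end
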